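/- Let H be a real inner product space, let B : H × H → ℝ be a symmetric bilinear form which is positive semidefinite (B(x,x) ≥ 0 for all x ∈ H), let T ⊆ H be a linear subspace on which B vanishes (B(h,h) = 0 for all h ∈ T), let W ⊆ H be a subset, and let C > 0 be a constant such that B(g,g) ≥ C·‖g‖² for all g ∈ W. Then for every f ∈ H that is orthogonal to T (i.e. ⟨f,h⟩ = 0 for all h ∈ T) and that admits a decomposition f = g + h with g ∈ W and h ∈ T, one has B(f,f) ≥ C·‖f‖². -/

import Mathlib

/-!
Expanding `B (x + t • h) (x + t • h) ≥ 0` in `t` shows that an isotropic vector `h` of a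
nonnegative form satisfies `B x h + B h x = 0` for all `x`, so `B (g + h) (g + h) = B g g`. On the other
hand `f = g + h` with `f ⟂ h` gives `‖g‖² = ‖f‖² + ‖h‖² ≥ ‖f‖²` by Pythagoras, so coercivity
passes from `g` to `f`.
-/

open scoped RealInnerProductSpace

namespace LinearMap

variable {K M : Type*} [Field K] [LinearOrder K] [IsStrictOrderedRing K]
  [AddCommGroup M] [Module K M] {B : M →ₗ[K] M →ₗ[K] K}

theorem apply_add_apply_eq_zero_of_apply_self_eq_zero (hB : B.IsNonneg) {h : M}
    (hh : B h h = 0) (x : M) : B x h + B h x = 0 := by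
  have hquad : ∀ t : K, 0 ≤ 0 * (t * t) + (B x h + B h x) * t + B x x := fun t ↦ by
    have hexpand : B (x + t • h) (x + t • h) = 0 * (t * t) + (B x h + B h x) * t + B x x := by
      simp only [map_add, map_smul, add_apply, smul_apply, smul_eq_mul, hh]
      ring
    exact hexpand ▸ hB.nonneg _
  have hdisc := discrim_le_zero hquad
  rw [discrim, mul_zero, zero_mul, sub_zero] at hdisc
  exact pow_eq_zero_iff two_ne_zero |>.mp (le_antisymm hdisc (sq_nonneg _))

theorem apply_add_self_of_apply_self_eq_zero (hB : B.IsNonneg) {h : M} (hh : B h h = 0)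
    (x : M) : B (x + h) (x + h) = B x x := by
  have hcross := apply_add_apply_eq_zero_of_apply_self_eq_zero hB hh x
  simp only [map_add, add_apply, hh]
  linear_combination hcross

end LinearMap

theorem norm_le_norm_sub_of_inner_eq_zero {E : Type*} [NormedAddCommGroup E]
    [InnerProductSpace ℝ E] {x y : E} (hxy : ⟪x, y⟫ = 0) : ‖x‖ ≤ ‖x - y‖ := by
  rw [mul_self_le_mul_self_iff (norm_nonneg _) (norm_nonneg _),
    norm_sub_sq_eq_norm_sq_add_norm_sq_real hxy]
  exact le_add_of_nonneg_right (mul_self_nonneg _)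

theorem change_of_orthogonality
    {H : Type*} [NormedAddCommGroup H] [InnerProductSpace ℝ H]
    (B : H →ₗ[ℝ] H →ₗ[ℝ] ℝ)
    (hpsd : ∀ x : H, 0 ≤ B x x)
    (T : Submodule ℝ H)
    (hT : ∀ h ∈ T, B h h = 0)
    (W : Set H) (C : ℝ) (hC : 0 < C)
    (hW : ∀ g ∈ W, C * ‖g‖ ^ 2 ≤ B g g)
    (f : H) (hf : ∀ h ∈ T, ⟪f, h⟫ = 0)
    (g h : H) (hg : g ∈ W) (hh : h ∈ T) (hfgh : f = g + h) :
    C * ‖f‖ ^ 2 ≤ B f f := by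
  subst hfgh
  have hnorm : ‖g + h‖ ≤ ‖g‖ := by
    simpa using norm_le_norm_sub_of_inner_eq_zero (hf h hh)
  calc C * ‖g + h‖ ^ 2 ≤ C * ‖g‖ ^ 2 := by gcongr
    _ ≤ B g g := hW g hg
    _ = B (g + h) (g + h) := (B.apply_add_self_of_apply_self_eq_zero ⟨hpsd⟩ (hT h hh) g).symm
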